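/- Let F be a field and m ≥ 2. An m×m matrix C over F[X] satisfies (i) there exists an m×m matrix E over F[X] with C·E = I_m and (ii) the entrywise evaluation of C at X = 1 equals I_m, if and only if there exist r ∈ ℕ, data (i_s, j_s, a_s, k_s) for s = 1, …, r with i_s ≠ j_s, a_s ∈ F nonzero, k_s ∈ ℕ, and a constant diagonal m×m matrix C′ over F with det(C′) = 1, such that C = E_r · E_{r−1} ⋯ E_1 · C′, where E_s = I_m + a_s·E_{i_s j_s} when k_s = 0 and E_s = I_m − a_s·E_{i_s j_s} + a_s·E_{i_s j_s}·X^{k_s} when k_s ≥ 1, and moreover the product (taken in the same relative order) of those factors E_s having k_s = 0, multiplied on the right by C′, equals I_m. -/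

import Mathlib

/-!
Over a field `F`, every invertible matrix over `F[X]` is a product of transvections `I + p E_ij`
(`p ∈ F[X]`) and a constant diagonal matrix. This goes by induction on the sum of the row degrees:
since `det C` is a nonzero constant, the matrix of leading row coefficients is singular, and a left
kernel vector `w` of it tells how to cancel the leading terms of the row `i₀` of largest degree in
the support of `w` by adding to it the multiples `w i X^(r i₀ - r i)` of the other rows, `r i`
being the degree of row `i`. Constant
matrices are handled by Gaussian elimination, pushing the diagonal factor to the right.

Splitting `p` into monomials and writing `I + a X^k E_ij = (I + a E_ij)(I - a E_ij + a X^k E_ij)`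
for `k ≥ 1` gives the factors `E_s`. At `X = 1` every factor with `k ≥ 1` becomes `I`, so
`C(1) = I` is exactly the condition on the constant factors, which also forces `det C′ = 1`.
-/

open Polynomial Matrix

theorem Submonoid.exists_list_map_prod_eq_of_mem_closure_range {M ι : Type*} [Monoid M]
    {f : ι → M} {x : M} (hx : x ∈ Submonoid.closure (Set.range f)) :
    ∃ l : List ι, (l.map f).prod = x := by
  rw [← FreeMonoid.mrange_lift] at hx
  obtain ⟨w, rfl⟩ := hx
  exact ⟨w.toList, (FreeMonoid.lift_apply f w).symm⟩

theorem Polynomial.coeff_prod_sum_of_natDegree_le {R ι : Type*} [CommSemiring R] (s : Finset ι)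
    (f : ι → R[X]) (d : ι → ℕ) (h : ∀ i ∈ s, (f i).natDegree ≤ d i) :
    (∏ i ∈ s, f i).coeff (∑ i ∈ s, d i) = ∏ i ∈ s, (f i).coeff (d i) := by
  classical
  induction s using Finset.induction_on with
  | empty => simp
  | insert a s ha IH =>
    rw [Finset.prod_insert ha, Finset.sum_insert ha, Finset.prod_insert ha,
      coeff_mul_add_eq_of_natDegree_le (h a (Finset.mem_insert_self a s))
        ((natDegree_prod_le s f).trans
          (Finset.sum_le_sum fun i hi => h i (Finset.mem_insert_of_mem hi))),
      IH fun i hi => h i (Finset.mem_insert_of_mem hi)]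

namespace Matrix

open TransvectionStruct

section Transvection

variable {n R S : Type*} [DecidableEq n] [CommRing R] [CommRing S]

def TransvectionStruct.map (f : R →+* S) (t : TransvectionStruct n R) :
    TransvectionStruct n S :=
  ⟨t.i, t.j, t.hij, f t.c⟩

theorem transvection_map (f : R →+* S) (i j : n) (c : R) :
    (transvection i j c).map f = transvection i j (f c) := by
  simp [transvection, Matrix.map_add]

theorem TransvectionStruct.toMatrix_map (f : R →+* S) (t : TransvectionStruct n R) :
    (t.map f).toMatrix = t.toMatrix.map f :=
  (transvection_map f t.i t.j t.c).symm

variable [Fintype n]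

theorem TransvectionStruct.toMatrix_map_prod (f : R →+* S) (L : List (TransvectionStruct n R)) :
    ((L.map (TransvectionStruct.map f)).map toMatrix).prod = (L.map toMatrix).prod.map f := by
  induction L with
  | nil => simp
  | cons t L IH =>
    rw [List.map_cons, List.map_cons, List.map_cons, List.prod_cons, List.prod_cons, IH,
      toMatrix_map, Matrix.map_mul]

theorem TransvectionStruct.det_eq_one_of_prod_mul_eq_one {L : List (TransvectionStruct n R)}
    {M : Matrix n n R} (h : (L.map toMatrix).prod * M = 1) : M.det = 1 := by
  simpa only [det_mul, det_toMatrix_prod, one_mul, det_one] using congrArg det h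

theorem transvection_mul_eq_updateRow {m : Type*} {i j : n} (h : i ≠ j) (c : R)
    (M : Matrix n m R) :
    transvection i j c * M = M.updateRow i (M i + c • M j) := by
  ext a b
  by_cases ha : a = i
  · subst ha; simp
  · simp [ha]

theorem exists_list_transvec_mul_eq_updateRow {m : Type*} (i₀ : n) (c : n → R)
    (hc : c i₀ = 1) :
    ∃ L : List (TransvectionStruct n R), ∀ M : Matrix n m R,
      (L.map toMatrix).prod * M = M.updateRow i₀ (c ᵥ* M) := by
  suffices key : ∀ s : Finset n, i₀ ∉ s → ∃ L : List (TransvectionStruct n R),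
      ∀ M : Matrix n m R,
        (L.map toMatrix).prod * M = M.updateRow i₀ (M i₀ + ∑ i ∈ s, c i • M i) by
    obtain ⟨L, hL⟩ := key (Finset.univ.erase i₀) (Finset.notMem_erase i₀ _)
    refine ⟨L, fun M => ?_⟩
    rw [hL, vecMul_eq_sum, ← Finset.add_sum_erase _ _ (Finset.mem_univ i₀), hc, one_smul]
  intro s
  induction s using Finset.induction_on with
  | empty => exact fun _ => ⟨[], fun M => by simp⟩
  | insert a s ha IH =>
    intro hs
    obtain ⟨L, hL⟩ := IH (fun h => hs (Finset.mem_insert_of_mem h))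
    have hai₀ : i₀ ≠ a := fun h => hs (h ▸ Finset.mem_insert_self _ _)
    refine ⟨⟨i₀, a, hai₀, c a⟩ :: L, fun M => ?_⟩
    rw [List.map_cons, List.prod_cons, Matrix.mul_assoc, hL, toMatrix_mk,
      transvection_mul_eq_updateRow hai₀, updateRow_ne hai₀.symm, updateRow_self,
      updateRow_idem, Finset.sum_insert ha]
    congr 1
    abel

end Transvection

section Field

variable {n K : Type*} [Fintype n] [DecidableEq n] [Field K]

theorem diagonal_mul_transvection {d : n → K} {j : n} (hd : d j ≠ 0) (i : n) (c : K) :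
    diagonal d * transvection i j c = transvection i j (d i * c / d j) * diagonal d := by
  have hsingle : diagonal d * single i j c = single i j (d i * c / d j) * diagonal d := by
    ext a b
    by_cases h : a = i ∧ b = j
    · obtain ⟨rfl, rfl⟩ := h
      simp [hd]
    · simp [single_apply_of_ne (h := fun h' => h ⟨h'.1.symm, h'.2.symm⟩)]
  simp only [transvection, Matrix.mul_add, Matrix.add_mul, Matrix.mul_one, Matrix.one_mul,
    hsingle]

theorem exists_list_transvec_mul_diagonal_eq_diagonal_mul {d : n → K} (hd : ∀ i, d i ≠ 0)
    (L : List (TransvectionStruct n K)) :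
    ∃ L' : List (TransvectionStruct n K),
      diagonal d * (L.map toMatrix).prod = (L'.map toMatrix).prod * diagonal d := by
  induction L with
  | nil => exact ⟨[], by simp⟩
  | cons t L IH =>
    obtain ⟨L', hL'⟩ := IH
    refine ⟨⟨t.i, t.j, t.hij, d t.i * t.c / d t.j⟩ :: L', ?_⟩
    rw [List.map_cons, List.prod_cons, ← Matrix.mul_assoc, toMatrix,
      diagonal_mul_transvection (hd _), Matrix.mul_assoc, hL', List.map_cons, List.prod_cons,
      Matrix.mul_assoc, toMatrix_mk]

theorem exists_list_transvec_mul_diagonal_of_det_ne_zero {M : Matrix n n K} (hM : M.det ≠ 0) :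
    ∃ (L : List (TransvectionStruct n K)) (d : n → K),
      M = (L.map toMatrix).prod * diagonal d := by
  obtain ⟨L₁, L₂, d, rfl⟩ := Pivot.exists_list_transvec_mul_diagonal_mul_list_transvec M
  have hd : ∀ i, d i ≠ 0 := by
    simpa [det_diagonal, Finset.prod_ne_zero_iff] using hM
  obtain ⟨L₂', hL₂'⟩ := exists_list_transvec_mul_diagonal_eq_diagonal_mul hd L₂
  refine ⟨L₁ ++ L₂', d, ?_⟩
  rw [Matrix.mul_assoc, hL₂', List.map_append, List.prod_append, Matrix.mul_assoc]

end Field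

section RowDegree

variable {n m R : Type*} [Fintype m] [CommRing R]

def rowNatDegree (C : Matrix n m R[X]) (i : n) : ℕ :=
  Finset.univ.sup fun j => (C i j).natDegree

def rowLeadingCoeff (C : Matrix n m R[X]) : Matrix n m R :=
  of fun i j => (C i j).coeff (C.rowNatDegree i)

theorem natDegree_le_rowNatDegree (C : Matrix n m R[X]) (i : n) (j : m) :
    (C i j).natDegree ≤ C.rowNatDegree i :=
  Finset.le_sup (f := fun j => (C i j).natDegree) (Finset.mem_univ j)

theorem rowNatDegree_updateRow_ne [DecidableEq n] (C : Matrix n m R[X]) {i₀ i : n}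
    (h : i ≠ i₀) (v : m → R[X]) : (C.updateRow i₀ v).rowNatDegree i = C.rowNatDegree i := by
  simp [rowNatDegree, updateRow_ne h]

variable [Fintype n] [DecidableEq n]

theorem sum_rowNatDegree_updateRow_lt (C : Matrix n m R[X]) {i₀ : n} {v : m → R[X]}
    (hpos : 0 < C.rowNatDegree i₀) (hv : ∀ b, (v b).degree < C.rowNatDegree i₀) :
    ∑ i, (C.updateRow i₀ v).rowNatDegree i < ∑ i, C.rowNatDegree i := by
  have hrow : (C.updateRow i₀ v).rowNatDegree i₀ < C.rowNatDegree i₀ := by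
    rw [rowNatDegree, updateRow_self, Finset.sup_lt_iff hpos]
    intro b _
    have := natDegree_le_iff_coeff_eq_zero.mpr fun k (hk : C.rowNatDegree i₀ - 1 < k) =>
      (degree_lt_iff_coeff_zero _ _).mp (hv b) k (by omega)
    omega
  refine Finset.sum_lt_sum (fun i _ => ?_) ⟨i₀, Finset.mem_univ _, hrow⟩
  by_cases hi : i = i₀
  · exact hi ▸ hrow.le
  · rw [rowNatDegree_updateRow_ne C hi]

theorem coeff_det_sum_rowNatDegree (C : Matrix n n R[X]) :
    C.det.coeff (∑ i, C.rowNatDegree i) = C.rowLeadingCoeff.det := by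
  simp only [det_apply, finsetSum_coeff, coeff_smul]
  refine Finset.sum_congr rfl fun σ _ => ?_
  rw [← Equiv.sum_comp σ, coeff_prod_sum_of_natDegree_le _ _ _
    fun i _ => C.natDegree_le_rowNatDegree (σ i) i]
  rfl

theorem det_rowLeadingCoeff_eq_zero [IsDomain R] {C : Matrix n n R[X]} (hC : IsUnit C.det)
    (hpos : 0 < ∑ i, C.rowNatDegree i) : C.rowLeadingCoeff.det = 0 := by
  rw [← coeff_det_sum_rowNatDegree]
  exact coeff_eq_zero_of_natDegree_lt (natDegree_eq_zero_of_isUnit hC ▸ hpos)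

end RowDegree

section Reduction

variable {n m F : Type*} [Fintype n] [Fintype m] [Field F]

theorem degree_vecMul_lt_rowNatDegree {C : Matrix n m F[X]} {w : n → F}
    (hw : w ᵥ* C.rowLeadingCoeff = 0) {i₀ : n}
    (hi₀ : ∀ i, w i ≠ 0 → C.rowNatDegree i ≤ C.rowNatDegree i₀) (b : m) :
    (((fun i => Polynomial.C (w i) * X ^ (C.rowNatDegree i₀ - C.rowNatDegree i)) ᵥ* C) b).degree
      < C.rowNatDegree i₀ := by
  set r := C.rowNatDegree
  rw [degree_lt_iff_coeff_zero]
  intro k hk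
  have hterm : ∀ i, (Polynomial.C (w i) * X ^ (r i₀ - r i) * C i b).coeff k
      = w i * (C i b).coeff (r i + (k - r i₀)) := by
    intro i
    by_cases hwi : w i = 0
    · simp [hwi]
    have := hi₀ i hwi
    rw [mul_assoc, coeff_C_mul, coeff_X_pow_mul', if_pos (by omega)]
    congr 2
    omega
  simp only [vecMul, dotProduct, finsetSum_coeff, hterm]
  rcases hk.eq_or_lt with rfl | hlt
  · simpa [vecMul, dotProduct, rowLeadingCoeff] using congrFun hw b
  · refine Finset.sum_eq_zero fun i _ => ?_
    rw [coeff_eq_zero_of_natDegree_lt ((C.natDegree_le_rowNatDegree i b).trans_lt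
      (show r i < r i + (k - r i₀) by omega)), mul_zero]

variable [DecidableEq n]

theorem exists_list_transvec_mul_sum_rowNatDegree_lt {C : Matrix n n F[X]} (hC : IsUnit C.det)
    (hpos : 0 < ∑ i, C.rowNatDegree i) :
    ∃ L : List (TransvectionStruct n F[X]),
      ∑ i, ((L.map toMatrix).prod * C).rowNatDegree i < ∑ i, C.rowNatDegree i := by
  classical
  set r := C.rowNatDegree
  obtain ⟨v, hv0, hv⟩ := exists_vecMul_eq_zero_iff.mpr (det_rowLeadingCoeff_eq_zero hC hpos)
  have hsupp : (Finset.univ.filter fun i => v i ≠ 0).Nonempty := by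
    obtain ⟨i, hi⟩ := Function.ne_iff.mp hv0
    exact ⟨i, by simpa using hi⟩
  obtain ⟨i₀, hi₀, hmax⟩ := Finset.exists_max_image _ r hsupp
  replace hi₀ : v i₀ ≠ 0 := by simpa using hi₀
  -- normalised so that `c i₀ = 1`: transvections cannot rescale row `i₀`
  set w := (v i₀)⁻¹ • v
  have hw : w ᵥ* C.rowLeadingCoeff = 0 := by rw [smul_vecMul, hv, smul_zero]
  have hmax' : ∀ i, w i ≠ 0 → r i ≤ r i₀ := fun i hi =>
    hmax i (by simpa [w] using right_ne_zero_of_mul hi)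
  set c : n → F[X] := fun i => Polynomial.C (w i) * X ^ (r i₀ - r i)
  obtain ⟨L, hL⟩ := exists_list_transvec_mul_eq_updateRow (m := n) i₀ c
    (by simp only [c, w, Pi.smul_apply, smul_eq_mul, inv_mul_cancel₀ hi₀, map_one, Nat.sub_self,
      pow_zero, mul_one])
  have hdeg : ∀ b, ((c ᵥ* C) b).degree < r i₀ := degree_vecMul_lt_rowNatDegree hw hmax'
  have hr₀ : 0 < r i₀ := by
    refine Nat.pos_of_ne_zero fun h => ?_
    have hzero : (C.updateRow i₀ (c ᵥ* C)).det = 0 := by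
      refine det_eq_zero_of_row_eq_zero i₀ fun b => ?_
      rw [updateRow_self]
      refine Polynomial.ext fun k => ?_
      rw [coeff_zero]
      exact (degree_lt_iff_coeff_zero _ _).mp (hdeg b) k (h.trans_le k.zero_le)
    rw [← hL, det_mul, det_toMatrix_prod, one_mul] at hzero
    exact hC.ne_zero hzero
  exact ⟨L, hL C ▸ C.sum_rowNatDegree_updateRow_lt hr₀ hdeg⟩

theorem exists_list_transvec_mul_diagonal_of_isUnit_det {C : Matrix n n F[X]}
    (hC : IsUnit C.det) : ∃ (L : List (TransvectionStruct n F[X])) (d : n → F),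
      C = (L.map toMatrix).prod * (diagonal d).map Polynomial.C := by
  induction hN : ∑ i, C.rowNatDegree i using Nat.strong_induction_on generalizing C with
  | _ N IH =>
  rcases Nat.eq_zero_or_pos N with rfl | hpos
  · have hC₀ : C = (C.map fun p => p.coeff 0).map Polynomial.C := by
      ext i j : 1
      have hi : C.rowNatDegree i = 0 := Finset.sum_eq_zero_iff.mp hN i (Finset.mem_univ _)
      exact eq_C_of_natDegree_eq_zero (Nat.le_zero.mp (hi ▸ C.natDegree_le_rowNatDegree i j))
    have hdet : (C.map fun p => p.coeff 0).det ≠ 0 := by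
      intro h
      rw [hC₀, ← RingHom.mapMatrix_apply, ← RingHom.map_det, h, map_zero] at hC
      exact not_isUnit_zero hC
    obtain ⟨L, d, hL⟩ := exists_list_transvec_mul_diagonal_of_det_ne_zero hdet
    refine ⟨L.map (TransvectionStruct.map Polynomial.C), d, ?_⟩
    rw [hC₀, hL, Matrix.map_mul, toMatrix_map_prod]
  · obtain ⟨L, hL⟩ := exists_list_transvec_mul_sum_rowNatDegree_lt hC (hN ▸ hpos)
    have hC' : IsUnit ((L.map toMatrix).prod * C).det := by
      rwa [det_mul, det_toMatrix_prod, one_mul]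
    obtain ⟨L', d, hL'⟩ := IH _ (hN ▸ hL) hC' rfl
    refine ⟨L.reverse.map TransvectionStruct.inv ++ L', d, ?_⟩
    rw [List.map_append, List.prod_append, Matrix.mul_assoc, ← hL', ← Matrix.mul_assoc,
      List.map_map, reverse_inv_prod_mul_prod, Matrix.one_mul]

end Reduction

end Matrix

structure ElementaryFactor (n R : Type*) [Zero R] where
  i : n
  j : n
  hij : i ≠ j
  a : R
  ha : a ≠ 0
  k : ℕ

namespace ElementaryFactor

section CommRing

variable {n R : Type*} [DecidableEq n] [CommRing R]

noncomputable def toMatrix (e : ElementaryFactor n R) : Matrix n n R[X] :=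
  if e.k = 0 then 1 + single e.i e.j (C e.a)
  else 1 - single e.i e.j (C e.a) + single e.i e.j (C e.a * X ^ e.k)

def transvec (e : ElementaryFactor n R) : TransvectionStruct n R :=
  ⟨e.i, e.j, e.hij, e.a⟩

theorem toMatrix_eq_transvection (e : ElementaryFactor n R) :
    e.toMatrix = transvection e.i e.j (C e.a * if e.k = 0 then 1 else X ^ e.k - 1) := by
  unfold toMatrix
  split_ifs
  · simp [transvection]
  · rw [transvection, mul_sub, mul_one, sub_eq_add_neg (C e.a * X ^ e.k), single_add,
      ← single_neg]
    abel

theorem toMatrix_map_eval_one (e : ElementaryFactor n R) :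
    e.toMatrix.map (eval 1) = if e.k = 0 then e.transvec.toMatrix else 1 := by
  rw [toMatrix_eq_transvection, ← coe_evalRingHom, transvection_map]
  split_ifs <;> simp [transvec]

variable [Fintype n]

theorem det_toMatrix (e : ElementaryFactor n R) : e.toMatrix.det = 1 := by
  rw [toMatrix_eq_transvection, det_transvection_of_ne _ _ e.hij]

theorem det_prod_toMatrix (l : List (ElementaryFactor n R)) : (l.map toMatrix).prod.det = 1 := by
  induction l with
  | nil => simp
  | cons e l IH => rw [List.map_cons, List.prod_cons, det_mul, IH, det_toMatrix, one_mul]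

theorem prod_toMatrix_map_eval_one (l : List (ElementaryFactor n R)) :
    (l.map toMatrix).prod.map (eval 1)
      = (((l.filter fun e => e.k = 0).map transvec).map TransvectionStruct.toMatrix).prod := by
  induction l with
  | nil => simp
  | cons e l IH =>
    rw [List.map_cons, List.prod_cons, ← coe_evalRingHom, Matrix.map_mul, coe_evalRingHom, IH,
      toMatrix_map_eval_one, List.filter_cons]
    split_ifs with h <;> simp_all

theorem map_eval_one_prod_mul_diagonal (l : List (ElementaryFactor n R)) (d : n → R) :
    ((l.map toMatrix).prod * (diagonal d).map C).map (eval 1)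
      = (((l.filter fun e => e.k = 0).map transvec).map TransvectionStruct.toMatrix).prod
        * diagonal d := by
  rw [← coe_evalRingHom, Matrix.map_mul, coe_evalRingHom, prod_toMatrix_map_eval_one,
    Matrix.map_map]
  simp [Function.comp_def]

theorem transvection_mem_closure {i j : n} (hij : i ≠ j) (p : R[X]) :
    transvection i j p ∈ Submonoid.closure (Set.range (toMatrix (n := n) (R := R))) := by
  induction p using Polynomial.induction_on' with
  | add p q hp hq =>
    rw [← transvection_mul_transvection_same _ _ hij]
    exact mul_mem hp hq
  | monomial k a =>
    by_cases ha : a = 0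
    · simp [ha, one_mem]
    have hmem : ∀ k, toMatrix ⟨i, j, hij, a, ha, k⟩ ∈
        Submonoid.closure (Set.range (toMatrix (n := n) (R := R))) :=
      fun k => Submonoid.subset_closure ⟨_, rfl⟩
    by_cases hk : k = 0
    · subst hk
      simpa [toMatrix_eq_transvection] using hmem 0
    · have := mul_mem (hmem 0) (hmem k)
      rwa [toMatrix_eq_transvection, toMatrix_eq_transvection,
        transvection_mul_transvection_same _ _ hij, if_pos rfl, if_neg hk, ← mul_add,
        add_sub_cancel, C_mul_X_pow_eq_monomial] at this

end CommRing

section Field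

variable {n F : Type*} [Fintype n] [DecidableEq n] [Field F]

theorem exists_list_mul_diagonal {M : Matrix n n F[X]} (hM : IsUnit M.det) :
    ∃ (l : List (ElementaryFactor n F)) (d : n → F),
      M = (l.map toMatrix).prod * (diagonal d).map C := by
  obtain ⟨L, d, rfl⟩ := exists_list_transvec_mul_diagonal_of_isUnit_det hM
  have hmem : (L.map TransvectionStruct.toMatrix).prod ∈
      Submonoid.closure (Set.range (toMatrix (n := n) (R := F))) :=
    Submonoid.list_prod_mem _ <| List.forall_mem_map.mpr fun t _ =>
      transvection_mem_closure t.hij t.c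
  obtain ⟨l, hl⟩ := Submonoid.exists_list_map_prod_eq_of_mem_closure_range hmem
  exact ⟨l, d, by rw [hl]⟩

theorem isUnit_det_and_map_eval_one_eq_one_iff {M : Matrix n n F[X]} :
    (IsUnit M.det ∧ M.map (eval 1) = 1) ↔ ∃ (l : List (ElementaryFactor n F)) (d : n → F),
      M = (l.map toMatrix).prod * (diagonal d).map C ∧
      (((l.filter fun e => e.k = 0).map transvec).map TransvectionStruct.toMatrix).prod
        * diagonal d = 1 := by
  constructor
  · rintro ⟨hM, hM1⟩
    obtain ⟨l, d, rfl⟩ := exists_list_mul_diagonal hM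
    exact ⟨l, d, rfl, map_eval_one_prod_mul_diagonal l d ▸ hM1⟩
  · rintro ⟨l, d, rfl, hcond⟩
    refine ⟨?_, (map_eval_one_prod_mul_diagonal l d).trans hcond⟩
    rw [det_mul, det_prod_toMatrix, one_mul, ← RingHom.mapMatrix_apply, ← RingHom.map_det,
      TransvectionStruct.det_eq_one_of_prod_mul_eq_one hcond, map_one]
    exact isUnit_one

def ofFin {r : ℕ} (i j : Fin r → n) (a : Fin r → F) (k : Fin r → ℕ)
    (hij : ∀ s, i s ≠ j s) (ha : ∀ s, a s ≠ 0) : List (ElementaryFactor n F) :=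
  (List.finRange r).reverse.map fun s => ⟨i s, j s, hij s, a s, ha s, k s⟩

variable {r : ℕ} (i j : Fin r → n) (a : Fin r → F) (k : Fin r → ℕ)
  (hij : ∀ s, i s ≠ j s) (ha : ∀ s, a s ≠ 0)

theorem prod_map_toMatrix_ofFin :
    ((ofFin i j a k hij ha).map toMatrix).prod
      = (((List.finRange r).reverse).map fun s =>
          if k s = 0 then (1 : Matrix n n F[X]) + single (i s) (j s) (C (a s))
          else 1 - single (i s) (j s) (C (a s)) + single (i s) (j s) (C (a s) * X ^ k s)).prod := by
  rw [ofFin, List.map_map]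
  rfl

theorem prod_transvec_ofFin_mul_diagonal_eq_one_iff (d : n → F) :
    ((((ofFin i j a k hij ha).filter fun e => e.k = 0).map transvec).map
        TransvectionStruct.toMatrix).prod * diagonal d = 1 ↔
      ((((List.finRange r).reverse).filter fun s => k s = 0).map fun s =>
          (1 : Matrix n n F[X]) + single (i s) (j s) (C (a s))).prod * (diagonal d).map C = 1 := by
  have hmap : ((((ofFin i j a k hij ha).filter fun e => e.k = 0).map transvec).map
        TransvectionStruct.toMatrix).prod.map C
      = ((((List.finRange r).reverse).filter fun s => k s = 0).map fun s =>
          (1 : Matrix n n F[X]) + single (i s) (j s) (C (a s))).prod := by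
    rw [← TransvectionStruct.toMatrix_map_prod, ofFin, List.filter_map, List.map_map,
      List.map_map, List.map_map]
    rfl
  rw [← hmap, ← Matrix.map_mul, ← Matrix.map_one C (map_zero C) (map_one C)]
  exact (Matrix.map_injective C_injective).eq_iff.symm

end Field

end ElementaryFactor

theorem lattice_structure_general {F : Type*} [Field F] {m : ℕ}
    (C : Matrix (Fin m) (Fin m) F[X]) :
    ((∃ E : Matrix (Fin m) (Fin m) F[X], C * E = 1) ∧
      C.map (Polynomial.eval (1 : F)) = 1) ↔
    ∃ (r : ℕ) (i j : Fin r → Fin m) (a : Fin r → F) (k : Fin r → ℕ) (d : Fin m → F),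
      (∀ s, i s ≠ j s) ∧ (∀ s, a s ≠ 0) ∧
      (Matrix.diagonal d).det = 1 ∧
      C = ((((List.finRange r).reverse).map (fun s =>
          if k s = 0 then
            (1 : Matrix (Fin m) (Fin m) F[X])
              + Matrix.single (i s) (j s) (Polynomial.C (a s))
          else
            (1 : Matrix (Fin m) (Fin m) F[X])
              - Matrix.single (i s) (j s) (Polynomial.C (a s))
              + Matrix.single (i s) (j s)
                  (Polynomial.C (a s) * (X : F[X]) ^ (k s)))).prod) *
        ((Matrix.diagonal d).map Polynomial.C) ∧
      (((((List.finRange r).reverse).filter (fun s => k s = 0)).map (fun s =>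
          (1 : Matrix (Fin m) (Fin m) F[X])
            + Matrix.single (i s) (j s) (Polynomial.C (a s)))).prod) *
        ((Matrix.diagonal d).map Polynomial.C) = 1 := by
  have hunit : (∃ E, C * E = 1) ↔ IsUnit C.det :=
    ⟨fun ⟨_, hE⟩ => isUnit_det_of_right_inverse hE,
      fun h => ⟨C⁻¹, mul_nonsing_inv C h⟩⟩
  rw [hunit, ElementaryFactor.isUnit_det_and_map_eval_one_eq_one_iff]
  constructor
  · rintro ⟨l, d, hC, hcond⟩
    set e := l.reverse.get
    have hl : ElementaryFactor.ofFin (e · |>.i) (e · |>.j) (e · |>.a) (e · |>.k) (e · |>.hij)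
        (e · |>.ha) = l := by
      rw [ElementaryFactor.ofFin, List.map_reverse, List.map_get_finRange, List.reverse_reverse]
    rw [← hl, ElementaryFactor.prod_map_toMatrix_ofFin] at hC
    rw [← hl] at hcond
    exact ⟨_, _, _, _, _, d, (e · |>.hij), (e · |>.ha),
      TransvectionStruct.det_eq_one_of_prod_mul_eq_one hcond, hC,
      (ElementaryFactor.prod_transvec_ofFin_mul_diagonal_eq_one_iff _ _ _ _ _ _ d).mp hcond⟩
  · rintro ⟨r, i, j, a, k, d, hij, ha, -, hC, hcond⟩
    exact ⟨ElementaryFactor.ofFin i j a k hij ha, d,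
      by rwa [ElementaryFactor.prod_map_toMatrix_ofFin],
      (ElementaryFactor.prod_transvec_ofFin_mul_diagonal_eq_one_iff _ _ _ _ _ _ d).mpr hcond⟩

/-- The lattice-structure characterization (Theorem 5.1, without the genus bound):
`C` is (the `t = z⁻¹` form of) a pseudoidentity matrix if and only if it is a product
of elementary factors `E_s` (constant transvections for `k_s = 0`, primitive factors
`I_m − a_s·E_{i_s j_s} + a_s·E_{i_s j_s}·X^{k_s}` for `k_s ≥ 1`) times a constant
diagonal matrix `C′` of determinant `1`, where the product of the `k_s = 0` factors
(in the same relative order) times `C′` equals `I_m`. -/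
theorem lattice_structure {F : Type*} [Field F] {m : ℕ} (hm : 2 ≤ m)
    (C : Matrix (Fin m) (Fin m) F[X]) :
    ((∃ E : Matrix (Fin m) (Fin m) F[X], C * E = 1) ∧
      C.map (Polynomial.eval (1 : F)) = 1) ↔
    ∃ (r : ℕ) (i j : Fin r → Fin m) (a : Fin r → F) (k : Fin r → ℕ) (d : Fin m → F),
      (∀ s, i s ≠ j s) ∧ (∀ s, a s ≠ 0) ∧
      (Matrix.diagonal d).det = 1 ∧
      C = ((((List.finRange r).reverse).map (fun s =>
          if k s = 0 then
            (1 : Matrix (Fin m) (Fin m) F[X])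
              + Matrix.single (i s) (j s) (Polynomial.C (a s))
          else
            (1 : Matrix (Fin m) (Fin m) F[X])
              - Matrix.single (i s) (j s) (Polynomial.C (a s))
              + Matrix.single (i s) (j s)
                  (Polynomial.C (a s) * (X : F[X]) ^ (k s)))).prod) *
        ((Matrix.diagonal d).map Polynomial.C) ∧
      (((((List.finRange r).reverse).filter (fun s => k s = 0)).map (fun s =>
          (1 : Matrix (Fin m) (Fin m) F[X])
            + Matrix.single (i s) (j s) (Polynomial.C (a s)))).prod) *
        ((Matrix.diagonal d).map Polynomial.C) = 1 :=
  lattice_structure_general C
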